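/- Let e and f be idempotents of S. (1) A G̃-orbit in J has nonempty intersection with both eJe and fJf if and only if it has nonempty intersection with (ef)J(ef). (2) A G̃-orbit in J^* has nonempty intersection with both J_e^* and J_f^* if and only if it has nonempty intersection with J_{ef}^*. -/
import Mathlib


/-- `x, y ∈ J` lie in the same `G̃`-orbit: `y = t * a * x * b * t⁻¹` with `t ∈ H = S^×`
(both `t` and `t⁻¹` lie in `S`) and `a, b ∈ N = 1 + J`. -/
def SameOrbitJ {F A : Type*} [Field F] [Ring A] [Algebra F A]
    (J : Ideal A) (S : Subalgebra F A) (x y : A) : Prop :=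
  ∃ t : Aˣ, (t : A) ∈ S ∧ ((t⁻¹ : Aˣ) : A) ∈ S ∧
    ∃ a b : A, a - 1 ∈ J ∧ b - 1 ∈ J ∧
      y = (t : A) * a * x * b * ((t⁻¹ : Aˣ) : A)

/-- `λ ∈ J_e^*`: the linear form `λ` on `J` satisfies `λ x = λ (e*x*e)` for all `x ∈ J`. -/
def MemJeStar {F A : Type*} [Field F] [Ring A] [Algebra F A]
    (J : Ideal A) (hJr : ∀ x ∈ J, ∀ a : A, x * a ∈ J) (e : A)
    (lam : (Submodule.restrictScalars F J) →ₗ[F] F) : Prop :=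
  ∀ x (hx : x ∈ J), lam ⟨x, hx⟩ = lam ⟨e * x * e, hJr _ (J.mul_mem_left e hx) e⟩

/-- `λ, μ ∈ J^*` lie in the same `G̃`-orbit: `μ x = λ (t * a * x * b * t⁻¹)` for all
`x ∈ J`, where `t ∈ H = S^×` (both `t` and `t⁻¹` lie in `S`) and `a, b ∈ N = 1 + J`. -/
def SameOrbitJStar {F A : Type*} [Field F] [Ring A] [Algebra F A]
    (J : Ideal A) (hJr : ∀ x ∈ J, ∀ a : A, x * a ∈ J) (S : Subalgebra F A)
    (lam mu : (Submodule.restrictScalars F J) →ₗ[F] F) : Prop :=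
  ∃ t : Aˣ, (t : A) ∈ S ∧ ((t⁻¹ : Aˣ) : A) ∈ S ∧
    ∃ a b : A, a - 1 ∈ J ∧ b - 1 ∈ J ∧
      ∀ x (hx : x ∈ J), mu ⟨x, hx⟩ =
        lam ⟨(t : A) * a * x * b * ((t⁻¹ : Aˣ) : A),
          hJr _ (hJr _ (J.mul_mem_left ((t : A) * a) hx) b) ((t⁻¹ : Aˣ) : A)⟩


section AuxOrbit
variable {A : Type*} [Ring A]

lemma aux_unit (J : Ideal A) (hJ : J = (⊥ : Ideal A).jacobson) {a : A} (ha : a - 1 ∈ J) :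
    ∃ u : Aˣ, (u : A) = a ∧ ((u⁻¹ : Aˣ) : A) - 1 ∈ J := by
  subst hJ
  have key : ∀ c : A, c - 1 ∈ (⊥ : Ideal A).jacobson →
      ∃ z : A, z * c = 1 ∧ z - 1 ∈ (⊥ : Ideal A).jacobson := by
    intro c hc
    obtain ⟨s, hs⟩ := Ideal.exists_mul_sub_mem_of_sub_one_mem_jacobson c hc
    rw [Ideal.mem_bot, sub_eq_zero] at hs
    refine ⟨s, hs, ?_⟩
    have h : s - 1 = -(s * (c - 1)) := by rw [mul_sub, mul_one, hs]; abel
    rw [h]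
    exact neg_mem (Ideal.mul_mem_left _ s hc)
  obtain ⟨z, hz, hz1⟩ := key a ha
  obtain ⟨w, hw, _⟩ := key z hz1
  have hwa : w = a := by
    have h := congrArg (· * a) hw
    simp only [one_mul] at h
    rw [mul_assoc, hz, mul_one] at h
    exact h
  refine ⟨⟨a, z, ?_, hz⟩, rfl, hz1⟩
  rw [← hwa]; exact hw

lemma aux_N_mul (J : Ideal A) (hJr : ∀ x ∈ J, ∀ a : A, x * a ∈ J)
    {a b : A} (ha : a - 1 ∈ J) (hb : b - 1 ∈ J) : a * b - 1 ∈ J := by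
  have h : a * b - 1 = (a - 1) * b + (b - 1) := by noncomm_ring
  rw [h]
  exact add_mem (hJr _ ha b) hb

lemma aux_N_conj (J : Ideal A) (hJr : ∀ x ∈ J, ∀ a : A, x * a ∈ J)
    {a : A} (t : Aˣ) (ha : a - 1 ∈ J) :
    (t : A) * a * ((t⁻¹ : Aˣ) : A) - 1 ∈ J := by
  have h : (t : A) * a * ((t⁻¹ : Aˣ) : A) - 1
      = (t : A) * (a - 1) * ((t⁻¹ : Aˣ) : A) := by
    rw [mul_sub, mul_one, sub_mul, t.mul_inv]
  rw [h]
  exact hJr _ (Ideal.mul_mem_left _ _ ha) _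

variable {F : Type*} [Field F] [Algebra F A]

lemma orbitJ_symm (J : Ideal A) (hJ : J = (⊥ : Ideal A).jacobson)
    (hJr : ∀ x ∈ J, ∀ a : A, x * a ∈ J) (S : Subalgebra F A) {x y : A}
    (h : SameOrbitJ J S x y) : SameOrbitJ J S y x := by
  obtain ⟨t, htS, htiS, a, b, ha, hb, hy⟩ := h
  obtain ⟨ua, hua, hua'⟩ := aux_unit J hJ ha
  obtain ⟨ub, hub, hub'⟩ := aux_unit J hJ hb
  rw [← hua, ← hub] at hy
  refine ⟨t⁻¹, htiS, by rw [inv_inv]; exact htS,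
    (t : A) * (ua⁻¹ : Aˣ) * ((t⁻¹ : Aˣ) : A), (t : A) * (ub⁻¹ : Aˣ) * ((t⁻¹ : Aˣ) : A),
    aux_N_conj J hJr t hua', aux_N_conj J hJr t hub', ?_⟩
  rw [inv_inv, hy]
  simp only [mul_assoc, Units.inv_mul_cancel_left, Units.mul_inv_cancel_left,
    Units.inv_mul, Units.mul_inv, mul_one]

lemma orbitJ_trans (J : Ideal A)
    (hJr : ∀ x ∈ J, ∀ a : A, x * a ∈ J) (S : Subalgebra F A) {x y z : A}
    (h1 : SameOrbitJ J S x y) (h2 : SameOrbitJ J S y z) : SameOrbitJ J S x z := by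
  obtain ⟨t, htS, htiS, a, b, ha, hb, hy⟩ := h1
  obtain ⟨s, hsS, hsiS, c, d, hc, hd, hz⟩ := h2
  refine ⟨s * t, S.mul_mem hsS htS, by rw [mul_inv_rev]; exact S.mul_mem htiS hsiS,
    ((t⁻¹ : Aˣ) : A) * c * (t : A) * a, b * ((t⁻¹ : Aˣ) : A) * d * (t : A), ?_, ?_, ?_⟩
  · have h : ((t⁻¹ : Aˣ) : A) * c * (t : A) * a - 1
        = ((t⁻¹ : Aˣ) : A) * (c - 1) * (t : A) * a + (a - 1) := by
      have ht : ((t⁻¹ : Aˣ) : A) * (t : A) = 1 := t.inv_mul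
      calc ((t⁻¹ : Aˣ) : A) * c * (t : A) * a - 1
          = ((t⁻¹ : Aˣ) : A) * (c - 1) * (t : A) * a
            + (((t⁻¹ : Aˣ) : A) * (t : A)) * a - 1 := by noncomm_ring
        _ = _ := by rw [ht, one_mul]; abel
    rw [h]
    exact add_mem (hJr _ (hJr _ (Ideal.mul_mem_left _ _ hc) _) _) ha
  · have h : b * ((t⁻¹ : Aˣ) : A) * d * (t : A) - 1
        = b * ((t⁻¹ : Aˣ) : A) * (d - 1) * (t : A) + (b - 1) := by
      have ht : ((t⁻¹ : Aˣ) : A) * (t : A) = 1 := t.inv_mul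
      calc b * ((t⁻¹ : Aˣ) : A) * d * (t : A) - 1
          = b * ((t⁻¹ : Aˣ) : A) * (d - 1) * (t : A)
            + b * (((t⁻¹ : Aˣ) : A) * (t : A)) - 1 := by noncomm_ring
        _ = _ := by rw [ht, mul_one]; abel
    rw [h]
    exact add_mem (hJr _ (Ideal.mul_mem_left _ _ hd) _) hb
  · rw [hz, hy]
    simp only [Units.val_mul, mul_inv_rev, mul_assoc, Units.inv_mul_cancel_left,
      Units.mul_inv_cancel_left]

end AuxOrbit

section AuxKey
variable {F A : Type*} [Field F] [Ring A] [Algebra F A]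

lemma aux_S_comm (J : Ideal A) (hred : ∀ a b : A, a * b - b * a ∈ J)
    (S : Subalgebra F A)
    (hS : IsCompl (Subalgebra.toSubmodule S) (Submodule.restrictScalars F J))
    {s u : A} (hs : s ∈ S) (hu : u ∈ S) : s * u = u * s := by
  have h1 : s * u - u * s ∈ Subalgebra.toSubmodule S :=
    sub_mem (S.mul_mem hs hu) (S.mul_mem hu hs)
  have h2 : s * u - u * s ∈ Submodule.restrictScalars F J := hred s u
  have h := Submodule.disjoint_def.mp hS.disjoint _ h1 h2
  rwa [sub_eq_zero] at h

lemma key1 (J : Ideal A) (hJ : J = (⊥ : Ideal A).jacobson)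
    (hJr : ∀ x ∈ J, ∀ a : A, x * a ∈ J)
    (S : Subalgebra F A) (hcomm : ∀ {s u : A}, s ∈ S → u ∈ S → s * u = u * s)
    {e x y : A} (he : e * e = e) (heS : e ∈ S)
    (hxy : SameOrbitJ J S x y) (hey : e * y = y) (hye : y * e = y) :
    SameOrbitJ J S x (e * x * e) := by
  obtain ⟨t, htS, htiS, a, b, ha, hb, hy⟩ := hxy
  obtain ⟨ua, hua, hua'⟩ := aux_unit J hJ ha
  obtain ⟨ub, hub, hub'⟩ := aux_unit J hJ hb
  rw [← hua] at ha hy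
  rw [← hub] at hb hy
  clear hua hub
  set tt : A := (t : A) with htt
  set ti : A := ((t⁻¹ : Aˣ) : A) with hti
  set av : A := (ua : A) with hav
  set ai : A := ((ua⁻¹ : Aˣ) : A) with hai
  set bv : A := (ub : A) with hbv
  set bi : A := ((ub⁻¹ : Aˣ) : A) with hbi
  set p : A := e * ((ai - 1) * e) with hp
  set q : A := e * ((bi - 1) * e) with hq
  have hpJ : p ∈ J := Ideal.mul_mem_left _ _ (hJr _ hua' e)
  have hqJ : q ∈ J := Ideal.mul_mem_left _ _ (hJr _ hub' e)
  have c1 : ∀ z : A, ti * (tt * z) = z := fun z => by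
    rw [hti, htt]; exact t.inv_mul_cancel_left z
  have c3 : ∀ z : A, ai * (av * z) = z := fun z => by
    rw [hai, hav]; exact ua.inv_mul_cancel_left z
  have c7 : bv * bi = 1 := by rw [hbv, hbi]; exact ub.mul_inv
  have hcet : e * tt = tt * e := hcomm heS htS
  have hceti : e * ti = ti * e := hcomm heS htiS
  have hA' : ∀ z : A, e * (tt * z) = tt * (e * z) := fun z => by
    rw [← mul_assoc, hcet, mul_assoc]
  have hB' : ∀ z : A, e * (ti * z) = ti * (e * z) := fun z => by
    rw [← mul_assoc, hceti, mul_assoc]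
  have hye' : ∀ z : A, y * (e * z) = y * z := fun z => by rw [← mul_assoc, hye]
  have hx' : x = ai * (ti * (y * (tt * bi))) := by
    rw [hy]
    simp only [mul_assoc, c1, c3, c7, mul_one]
  have h5 : e * (1 + q) = e * (bi * e) := by
    have h51 : e * q = e * (bi * e) - e := by
      have h52 : e * q = (e * e) * ((bi - 1) * e) := by rw [hq, ← mul_assoc]
      rw [h52, he, sub_mul, one_mul, mul_sub, ← mul_assoc, he]
    rw [mul_add, mul_one, h51]
    abel
  have hR : y * (tt * (bi * e)) = y * (tt * (1 + q)) := by
    calc y * (tt * (bi * e)) = y * (e * (tt * (bi * e))) := (hye' _).symm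
      _ = y * (tt * (e * (bi * e))) := by rw [hA']
      _ = y * (tt * (e * (1 + q))) := by rw [← h5]
      _ = y * (e * (tt * (1 + q))) := by rw [hA']
      _ = y * (tt * (1 + q)) := hye' _
  have hew : e * (ti * (y * (tt * (1 + q)))) = ti * (y * (tt * (1 + q))) := by
    rw [hB', ← mul_assoc e y, hey]
  have hL : e * (ai * (ti * (y * (tt * (1 + q)))))
      = (1 + p) * (ti * (y * (tt * (1 + q)))) := by
    set w : A := ti * (y * (tt * (1 + q))) with hw
    have hpw : p * w = e * (ai * w) - w := by
      have h61 : p * w = e * ((ai - 1) * (e * w)) := by rw [hp]; simp only [mul_assoc]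
      rw [h61, hew, sub_mul, one_mul, mul_sub, hew]
    calc e * (ai * w) = w + (e * (ai * w) - w) := by abel
      _ = w + p * w := by rw [hpw]
      _ = (1 + p) * w := by rw [add_mul, one_mul]
  have e4 : ti * (y * (tt * (1 + q))) = av * (x * (bv * (1 + q))) := by
    rw [hy]
    simp only [mul_assoc, c1, c3]
  refine ⟨1, by simp [S.one_mem], by simp [S.one_mem],
    (1 + p) * av, bv * (1 + q), ?_, ?_, ?_⟩
  · have h : (1 + p) * av - 1 = (av - 1) + p * av := by noncomm_ring
    rw [h]; exact add_mem ha (hJr _ hpJ av)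
  · have h : bv * (1 + q) - 1 = (bv - 1) + bv * q := by noncomm_ring
    rw [h]; exact add_mem hb (Ideal.mul_mem_left _ _ hqJ)
  · simp only [Units.val_one, inv_one, one_mul, mul_one]
    calc e * x * e = e * (ai * (ti * (y * (tt * (bi * e))))) := by
          conv_lhs => rw [hx']
          simp only [mul_assoc]
      _ = e * (ai * (ti * (y * (tt * (1 + q))))) := by rw [hR]
      _ = (1 + p) * (ti * (y * (tt * (1 + q)))) := hL
      _ = (1 + p) * (av * (x * (bv * (1 + q)))) := by rw [e4]
      _ = (1 + p) * av * x * (bv * (1 + q)) := by simp only [mul_assoc]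

lemma aux_evc (J : Ideal A) (g : (Submodule.restrictScalars F J) →ₗ[F] F)
    {u v : A} (hu : u ∈ J) (hv : v ∈ J) (h : u = v) :
    g ⟨u, hu⟩ = g ⟨v, hv⟩ := by subst h; rfl

/-- The `F`-linear endomorphism `x ↦ e * x * e` of `J`. -/
def cornerEndo (J : Ideal A) (hJr : ∀ x ∈ J, ∀ a : A, x * a ∈ J) (e : A) :
    (Submodule.restrictScalars F J) →ₗ[F] (Submodule.restrictScalars F J) where
  toFun z := ⟨e * (z : A) * e, hJr _ (J.mul_mem_left e z.2) e⟩
  map_add' z w := Subtype.ext (by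
    show e * ((z : A) + (w : A)) * e = e * (z : A) * e + e * (w : A) * e
    noncomm_ring)
  map_smul' c z := Subtype.ext (by
    show e * (c • (z : A)) * e = c • (e * (z : A) * e)
    rw [mul_smul_comm, smul_mul_assoc])

/-- `λ_e : x ↦ λ (e x e)`. -/
def cornerDual (J : Ideal A) (hJr : ∀ x ∈ J, ∀ a : A, x * a ∈ J) (e : A)
    (lam : (Submodule.restrictScalars F J) →ₗ[F] F) :
    (Submodule.restrictScalars F J) →ₗ[F] F :=
  lam.comp (cornerEndo J hJr e)

lemma cornerDual_apply (J : Ideal A) (hJr : ∀ x ∈ J, ∀ a : A, x * a ∈ J) (e : A)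
    (lam : (Submodule.restrictScalars F J) →ₗ[F] F) {x : A} (hx : x ∈ J) :
    cornerDual J hJr e lam ⟨x, hx⟩
      = lam ⟨e * x * e, hJr _ (J.mul_mem_left e hx) e⟩ := rfl

lemma cornerDual_memJeStar (J : Ideal A) (hJr : ∀ x ∈ J, ∀ a : A, x * a ∈ J)
    {e : A} (he : e * e = e)
    (lam : (Submodule.restrictScalars F J) →ₗ[F] F) :
    MemJeStar J hJr e (cornerDual J hJr e lam) := by
  intro x hx
  rw [cornerDual_apply, cornerDual_apply]
  exact aux_evc J lam _ _ (by
    rw [show e * (e * x * e) * e = (e * e) * x * (e * e) from by simp only [mul_assoc], he])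

lemma orbitJStar_symm (J : Ideal A) (hJ : J = (⊥ : Ideal A).jacobson)
    (hJr : ∀ x ∈ J, ∀ a : A, x * a ∈ J) (S : Subalgebra F A)
    {lam mu : (Submodule.restrictScalars F J) →ₗ[F] F}
    (h : SameOrbitJStar J hJr S lam mu) : SameOrbitJStar J hJr S mu lam := by
  obtain ⟨t, htS, htiS, a, b, ha, hb, hm⟩ := h
  obtain ⟨ua, hua, hua'⟩ := aux_unit J hJ ha
  obtain ⟨ub, hub, hub'⟩ := aux_unit J hJ hb
  rw [← hua] at ha hm
  rw [← hub] at hb hm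
  refine ⟨t⁻¹, htiS, by rw [inv_inv]; exact htS,
    (t : A) * ((ua⁻¹ : Aˣ) : A) * ((t⁻¹ : Aˣ) : A),
    (t : A) * ((ub⁻¹ : Aˣ) : A) * ((t⁻¹ : Aˣ) : A),
    aux_N_conj J hJr t hua', aux_N_conj J hJr t hub', ?_⟩
  intro x hx
  have harg : ((ua⁻¹ : Aˣ) : A) * (((t⁻¹ : Aˣ) : A) * (x * ((t : A) * ((ub⁻¹ : Aˣ) : A)))) ∈ J :=
    Ideal.mul_mem_left _ _ (Ideal.mul_mem_left _ _ (hJr _ hx _))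
  have h1 := hm _ harg
  calc lam ⟨x, hx⟩
      = lam ⟨(t : A) * (ua : A) *
          (((ua⁻¹ : Aˣ) : A) * (((t⁻¹ : Aˣ) : A) * (x * ((t : A) * ((ub⁻¹ : Aˣ) : A)))))
          * (ub : A) * ((t⁻¹ : Aˣ) : A), _⟩ :=
        (aux_evc J lam _ hx (by
          simp only [mul_assoc, Units.mul_inv_cancel_left, Units.inv_mul_cancel_left,
            Units.mul_inv, Units.inv_mul, mul_one])).symm
    _ = mu ⟨_, harg⟩ := h1.symm
    _ = mu ⟨((t⁻¹ : Aˣ) : A) * ((t : A) * ((ua⁻¹ : Aˣ) : A) * ((t⁻¹ : Aˣ) : A)) * x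
          * ((t : A) * ((ub⁻¹ : Aˣ) : A) * ((t⁻¹ : Aˣ) : A)) * (((t⁻¹)⁻¹ : Aˣ) : A), _⟩ :=
        aux_evc J mu _ _ (by
          simp only [inv_inv, mul_assoc, Units.inv_mul_cancel_left, Units.mul_inv_cancel_left,
            Units.inv_mul, Units.mul_inv, mul_one])

lemma orbitJStar_trans (J : Ideal A) (hJ : J = (⊥ : Ideal A).jacobson)
    (hJr : ∀ x ∈ J, ∀ a : A, x * a ∈ J) (S : Subalgebra F A)
    {lam mu nu : (Submodule.restrictScalars F J) →ₗ[F] F}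
    (h1 : SameOrbitJStar J hJr S lam mu) (h2 : SameOrbitJStar J hJr S mu nu) :
    SameOrbitJStar J hJr S lam nu := by
  obtain ⟨t, htS, htiS, a, b, ha, hb, hm1⟩ := h1
  obtain ⟨s, hsS, hsiS, c, d, hc, hd, hm2⟩ := h2
  refine ⟨t * s, S.mul_mem htS hsS, by rw [mul_inv_rev]; exact S.mul_mem hsiS htiS,
    ((s⁻¹ : Aˣ) : A) * a * (s : A) * c, d * ((s⁻¹ : Aˣ) : A) * b * (s : A), ?_, ?_, ?_⟩
  · have hconj : ((s⁻¹ : Aˣ) : A) * a * (((s⁻¹)⁻¹ : Aˣ) : A) - 1 ∈ J :=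
      aux_N_conj J hJr s⁻¹ ha
    rw [inv_inv] at hconj
    exact aux_N_mul J hJr hconj hc
  · have hconj : ((s⁻¹ : Aˣ) : A) * b * (((s⁻¹)⁻¹ : Aˣ) : A) - 1 ∈ J :=
      aux_N_conj J hJr s⁻¹ hb
    rw [inv_inv] at hconj
    have h := aux_N_mul J hJr hd hconj
    rwa [show d * (((s⁻¹ : Aˣ) : A) * b * (s : A)) = d * ((s⁻¹ : Aˣ) : A) * b * (s : A) from by
      simp only [mul_assoc]] at h
  · intro x hx
    have harg : (s : A) * c * x * d * ((s⁻¹ : Aˣ) : A) ∈ J :=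
      hJr _ (hJr _ (Ideal.mul_mem_left _ _ hx) _) _
    calc nu ⟨x, hx⟩ = mu ⟨(s : A) * c * x * d * ((s⁻¹ : Aˣ) : A), harg⟩ := hm2 x hx
      _ = lam ⟨(t : A) * a * ((s : A) * c * x * d * ((s⁻¹ : Aˣ) : A)) * b * ((t⁻¹ : Aˣ) : A),
            _⟩ := hm1 _ harg
      _ = lam ⟨((t * s : Aˣ) : A) * (((s⁻¹ : Aˣ) : A) * a * (s : A) * c) * x
            * (d * ((s⁻¹ : Aˣ) : A) * b * (s : A)) * (((t * s)⁻¹ : Aˣ) : A), _⟩ :=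
        aux_evc J lam _ _ (by
          simp only [Units.val_mul, mul_inv_rev, mul_assoc, Units.mul_inv_cancel_left,
            Units.inv_mul_cancel_left])

lemma key2 (J : Ideal A) (hJ : J = (⊥ : Ideal A).jacobson)
    (hJr : ∀ x ∈ J, ∀ a : A, x * a ∈ J)
    (S : Subalgebra F A) (hcomm : ∀ {s u : A}, s ∈ S → u ∈ S → s * u = u * s)
    {e : A} (he : e * e = e) (heS : e ∈ S)
    {lam mu : (Submodule.restrictScalars F J) →ₗ[F] F}
    (hrel : SameOrbitJStar J hJr S lam mu) (hmu : MemJeStar J hJr e mu) :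
    SameOrbitJStar J hJr S lam (cornerDual J hJr e lam) := by
  obtain ⟨t, htS, htiS, a, b, ha, hb, hm⟩ := hrel
  obtain ⟨ua, hua, hua'⟩ := aux_unit J hJ ha
  obtain ⟨ub, hub, hub'⟩ := aux_unit J hJ hb
  rw [← hua] at ha hm
  rw [← hub] at hb hm
  clear hua hub
  set tt : A := (t : A) with htt
  set ti : A := ((t⁻¹ : Aˣ) : A) with hti
  set av : A := (ua : A) with hav
  set ai : A := ((ua⁻¹ : Aˣ) : A) with hai
  set bv : A := (ub : A) with hbv
  set bi : A := ((ub⁻¹ : Aˣ) : A) with hbi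
  set p : A := e * ((ai - 1) * e) with hp
  set q : A := e * ((bi - 1) * e) with hq
  have hpJ : p ∈ J := Ideal.mul_mem_left _ _ (hJr _ hua' e)
  have hqJ : q ∈ J := Ideal.mul_mem_left _ _ (hJr _ hub' e)
  have c1 : ∀ z : A, ti * (tt * z) = z := fun z => by
    rw [hti, htt]; exact t.inv_mul_cancel_left z
  have c2 : ∀ z : A, tt * (ti * z) = z := fun z => by
    rw [hti, htt]; exact t.mul_inv_cancel_left z
  have c4 : ∀ z : A, av * (ai * z) = z := fun z => by
    rw [hai, hav]; exact ua.mul_inv_cancel_left z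
  have c6 : ∀ z : A, bi * (bv * z) = z := fun z => by
    rw [hbv, hbi]; exact ub.inv_mul_cancel_left z
  have c8 : tt * ti = 1 := by rw [htt, hti]; exact t.mul_inv
  have hcet : e * tt = tt * e := hcomm heS htS
  have hceti : e * ti = ti * e := hcomm heS htiS
  have hA' : ∀ z : A, e * (tt * z) = tt * (e * z) := fun z => by
    rw [← mul_assoc, hcet, mul_assoc]
  have hB' : ∀ z : A, e * (ti * z) = ti * (e * z) := fun z => by
    rw [← mul_assoc, hceti, mul_assoc]
  have h5 : e * (1 + q) = e * (bi * e) := by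
    have h51 : e * q = e * (bi * e) - e := by
      have h52 : e * q = (e * e) * ((bi - 1) * e) := by rw [hq, ← mul_assoc]
      rw [h52, he, sub_mul, one_mul, mul_sub, ← mul_assoc, he]
    rw [mul_add, mul_one, h51]
    abel
  have h6 : e * (1 + p) = e * (ai * e) := by
    have h51 : e * p = e * (ai * e) - e := by
      have h52 : e * p = (e * e) * ((ai - 1) * e) := by rw [hp, ← mul_assoc]
      rw [h52, he, sub_mul, one_mul, mul_sub, ← mul_assoc, he]
    rw [mul_add, mul_one, h51]
    abel
  have h7 : (1 + q) * e = e * (1 + q) := by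
    have h71 : q * e = q := by
      rw [hq, mul_assoc, mul_assoc, he]
    have h72 : e * q = q := by
      have h73 : e * q = (e * e) * ((bi - 1) * e) := by rw [hq, ← mul_assoc]
      rw [h73, he, ← hq]
    rw [add_mul, one_mul, mul_add, mul_one, h71, h72]
  -- inverse relation
  have hml : ∀ z (hz : z ∈ J), lam ⟨z, hz⟩
      = mu ⟨ai * (ti * (z * (tt * bi))),
          Ideal.mul_mem_left _ _ (Ideal.mul_mem_left _ _ (hJr _ hz _))⟩ := by
    intro z hz
    have harg : ai * (ti * (z * (tt * bi))) ∈ J :=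
      Ideal.mul_mem_left _ _ (Ideal.mul_mem_left _ _ (hJr _ hz _))
    have h1 := hm _ harg
    have h2 : tt * av * (ai * (ti * (z * (tt * bi)))) * bv * ti = z := by
      simp only [mul_assoc, c4, c2, c6, c8, mul_one]
    exact (h1.trans (aux_evc J lam _ hz h2)).symm
  refine ⟨1, by simp [S.one_mem], by simp [S.one_mem],
    tt * ((av * (1 + p)) * ti), tt * (((1 + q) * bv) * ti), ?_, ?_, ?_⟩
  · have hmem : av * (1 + p) - 1 ∈ J := by
      have h : av * (1 + p) - 1 = (av - 1) + av * p := by noncomm_ring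
      rw [h]; exact add_mem ha (Ideal.mul_mem_left _ _ hpJ)
    have h := aux_N_conj J hJr t hmem
    rwa [show (t : A) * (av * (1 + p)) * ((t⁻¹ : Aˣ) : A)
        = tt * ((av * (1 + p)) * ti) from by rw [← htt, ← hti, mul_assoc]] at h
  · have hmem : (1 + q) * bv - 1 ∈ J := by
      have h : (1 + q) * bv - 1 = (bv - 1) + q * bv := by noncomm_ring
      rw [h]; exact add_mem hb (hJr _ hqJ bv)
    have h := aux_N_conj J hJr t hmem
    rwa [show (t : A) * ((1 + q) * bv) * ((t⁻¹ : Aˣ) : A)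
        = tt * (((1 + q) * bv) * ti) from by rw [← htt, ← hti, mul_assoc]] at h
  · intro x hx
    have hexe : e * x * e ∈ J := hJr _ (J.mul_mem_left e hx) e
    have hW : ai * (ti * ((e * x * e) * (tt * bi))) ∈ J :=
      Ideal.mul_mem_left _ _ (Ideal.mul_mem_left _ _ (hJr _ hexe _))
    have hZ : (1 + p) * (ti * (x * (tt * (1 + q)))) ∈ J :=
      Ideal.mul_mem_left _ _ (Ideal.mul_mem_left _ _ (hJr _ hx _))
    have hE : e * (ai * (ti * ((e * x * e) * (tt * bi)))) * e
        = e * ((1 + p) * (ti * (x * (tt * (1 + q))))) * e := by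
      calc e * (ai * (ti * ((e * x * e) * (tt * bi)))) * e
          = e * (ai * (ti * (e * (x * (e * (tt * (bi * e))))))) := by simp only [mul_assoc]
        _ = e * (ai * (ti * (e * (x * (tt * (e * (bi * e))))))) := by rw [hA']
        _ = e * (ai * (ti * (e * (x * (tt * (e * (1 + q))))))) := by rw [← h5]
        _ = e * (ai * (e * (ti * (x * (tt * (e * (1 + q))))))) := by rw [← hB']
        _ = (e * (ai * e)) * (ti * (x * (tt * (e * (1 + q))))) := by simp only [mul_assoc]
        _ = (e * (1 + p)) * (ti * (x * (tt * (e * (1 + q))))) := by rw [← h6]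
        _ = e * ((1 + p) * (ti * (x * (tt * (e * (1 + q)))))) := by rw [mul_assoc]
        _ = e * ((1 + p) * (ti * (x * (tt * ((1 + q) * e))))) := by rw [h7]
        _ = e * ((1 + p) * (ti * (x * (tt * (1 + q))))) * e := by simp only [mul_assoc]
    calc cornerDual J hJr e lam ⟨x, hx⟩
        = lam ⟨e * x * e, hexe⟩ := rfl
      _ = mu ⟨ai * (ti * ((e * x * e) * (tt * bi))), hW⟩ := hml _ hexe
      _ = mu ⟨e * (ai * (ti * ((e * x * e) * (tt * bi)))) * e, _⟩ := hmu _ hW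
      _ = mu ⟨e * ((1 + p) * (ti * (x * (tt * (1 + q))))) * e, _⟩ := aux_evc J mu _ _ hE
      _ = mu ⟨(1 + p) * (ti * (x * (tt * (1 + q)))), hZ⟩ := (hmu _ hZ).symm
      _ = lam ⟨tt * av * ((1 + p) * (ti * (x * (tt * (1 + q))))) * bv * ti, _⟩ := hm _ hZ
      _ = lam ⟨((1 : Aˣ) : A) * (tt * ((av * (1 + p)) * ti)) * x
            * (tt * (((1 + q) * bv) * ti)) * (((1 : Aˣ)⁻¹ : Aˣ) : A), _⟩ :=
          aux_evc J lam _ _ (by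
            simp only [Units.val_one, inv_one, one_mul, mul_one, mul_assoc])

end AuxKey

/-- Corollary 2.10: (1) a `G̃`-orbit in `J` meets both `eJe` and `fJf` iff it meets
`(ef)J(ef)`; (2) a `G̃`-orbit in `J^*` meets both `J_e^*` and `J_f^*` iff it meets
`J_{ef}^*`. -/
theorem orbit_meets_corners_iff
    {F A : Type*} [Field F] [Fintype F] [Ring A] [Algebra F A] [FiniteDimensional F A]
    (J : Ideal A) (hJ : J = (⊥ : Ideal A).jacobson)
    (hJr : ∀ x ∈ J, ∀ a : A, x * a ∈ J)
    (hred : ∀ a b : A, a * b - b * a ∈ J)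
    (S : Subalgebra F A)
    (hS : IsCompl (Subalgebra.toSubmodule S) (Submodule.restrictScalars F J))
    (e f : A) (he : IsIdempotentElem e) (heS : e ∈ S)
    (hf : IsIdempotentElem f) (hfS : f ∈ S) :
    (∀ x : A, x ∈ J →
      (((∃ y : A, y ∈ J ∧ SameOrbitJ J S x y ∧ e * y = y ∧ y * e = y) ∧
        (∃ y : A, y ∈ J ∧ SameOrbitJ J S x y ∧ f * y = y ∧ y * f = y)) ↔
       (∃ y : A, y ∈ J ∧ SameOrbitJ J S x y ∧ (e * f) * y = y ∧ y * (e * f) = y))) ∧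
    (∀ lam : (Submodule.restrictScalars F J) →ₗ[F] F,
      (((∃ mu, SameOrbitJStar J hJr S lam mu ∧ MemJeStar J hJr e mu) ∧
        (∃ mu, SameOrbitJStar J hJr S lam mu ∧ MemJeStar J hJr f mu)) ↔
       (∃ mu, SameOrbitJStar J hJr S lam mu ∧ MemJeStar J hJr (e * f) mu))) := by
  have hcomm : ∀ {s u : A}, s ∈ S → u ∈ S → s * u = u * s := fun hs hu =>
    aux_S_comm J hred S hS hs hu
  have he' : e * e = e := he
  have hf' : f * f = f := hf
  have hfe : f * e = e * f := hcomm hfS heS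
  have he2 : ∀ z : A, e * (e * z) = e * z := fun z => by rw [← mul_assoc, he']
  have hf2 : ∀ z : A, f * (f * z) = f * z := fun z => by rw [← mul_assoc, hf']
  have hfe2 : ∀ z : A, f * (e * z) = e * (f * z) := fun z => by
    rw [← mul_assoc, hfe, mul_assoc]
  have hef' : (e * f) * (e * f) = e * f := by
    rw [mul_assoc, ← mul_assoc f e f, hfe, ← mul_assoc, ← mul_assoc, he', mul_assoc, hf']
  constructor
  · -- part (1)
    intro x hx
    constructor
    · rintro ⟨⟨y1, hy1J, hxy1, hey1, hy1e⟩, ⟨y2, hy2J, hxy2, hfy2, hy2f⟩⟩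
      have k1 : SameOrbitJ J S x (e * x * e) := key1 J hJ hJr S hcomm he' heS hxy1 hey1 hy1e
      have h2 : SameOrbitJ J S (e * x * e) y2 :=
        orbitJ_trans J hJr S (orbitJ_symm J hJ hJr S k1) hxy2
      have k2 : SameOrbitJ J S (e * x * e) (f * (e * x * e) * f) :=
        key1 J hJ hJr S hcomm hf' hfS h2 hfy2 hy2f
      have k3 : SameOrbitJ J S x (f * (e * x * e) * f) := orbitJ_trans J hJr S k1 k2
      have hy : f * (e * x * e) * f = (e * f) * x * (e * f) := by
        simp only [mul_assoc, hfe2, he2, hf2, hfe, he', hf']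
      rw [hy] at k3
      refine ⟨(e * f) * x * (e * f), hJr _ (J.mul_mem_left _ hx) _, k3, ?_, ?_⟩
      · rw [show (e * f) * ((e * f) * x * (e * f)) = ((e * f) * (e * f)) * x * (e * f) from by
          simp only [mul_assoc], hef']
      · rw [show ((e * f) * x * (e * f)) * (e * f) = (e * f) * x * ((e * f) * (e * f)) from by
          simp only [mul_assoc], hef']
    · rintro ⟨y, hyJ, hxy, hefy, hyef⟩
      refine ⟨⟨y, hyJ, hxy, ?_, ?_⟩, ⟨y, hyJ, hxy, ?_, ?_⟩⟩
      · conv_lhs => rw [← hefy]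
        rw [show e * ((e * f) * y) = ((e * e) * f) * y from by simp only [mul_assoc], he']
        exact hefy
      · conv_lhs => rw [← hyef]
        rw [show (y * (e * f)) * e = y * ((e * f) * e) from by simp only [mul_assoc]]
        rw [show (e * f) * e = e * (f * e) from by rw [mul_assoc], hfe, he2]
        exact hyef
      · conv_lhs => rw [← hefy]
        rw [show f * ((e * f) * y) = ((f * e) * f) * y from by simp only [mul_assoc], hfe]
        rw [show ((e * f) * f) * y = (e * (f * f)) * y from by simp only [mul_assoc], hf']
        exact hefy
      · conv_lhs => rw [← hyef]
        rw [show (y * (e * f)) * f = y * (e * (f * f)) from by simp only [mul_assoc], hf']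
        exact hyef
  · -- part (2)
    intro lam
    constructor
    · rintro ⟨⟨mu1, hlm1, hmu1e⟩, ⟨mu2, hlm2, hmu2f⟩⟩
      have k1 : SameOrbitJStar J hJr S lam (cornerDual J hJr e lam) :=
        key2 J hJ hJr S hcomm he' heS hlm1 hmu1e
      have h2 : SameOrbitJStar J hJr S (cornerDual J hJr e lam) mu2 :=
        orbitJStar_trans J hJ hJr S (orbitJStar_symm J hJ hJr S k1) hlm2
      have k2 : SameOrbitJStar J hJr S (cornerDual J hJr e lam)
          (cornerDual J hJr f (cornerDual J hJr e lam)) :=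
        key2 J hJ hJr S hcomm hf' hfS h2 hmu2f
      refine ⟨cornerDual J hJr f (cornerDual J hJr e lam),
        orbitJStar_trans J hJ hJr S k1 k2, ?_⟩
      intro x hx
      simp only [cornerDual_apply]
      exact aux_evc J lam _ _ (by simp only [mul_assoc, hfe2, he2, hf2, hfe, he', hf'])
    · rintro ⟨nu, hln, hnuef⟩
      refine ⟨⟨nu, hln, ?_⟩, ⟨nu, hln, ?_⟩⟩
      · intro x hx
        have hexe : e * x * e ∈ J := hJr _ (J.mul_mem_left e hx) e
        calc nu ⟨x, hx⟩
            = nu ⟨(e * f) * x * (e * f), hJr _ (J.mul_mem_left _ hx) _⟩ := hnuef x hx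
          _ = nu ⟨(e * f) * (e * x * e) * (e * f), hJr _ (J.mul_mem_left _ hexe) _⟩ :=
              aux_evc J nu _ _ (by simp only [mul_assoc, hfe2, he2, hf2, hfe, he', hf'])
          _ = nu ⟨e * x * e, hexe⟩ := (hnuef _ hexe).symm
      · intro x hx
        have hfxf : f * x * f ∈ J := hJr _ (J.mul_mem_left f hx) f
        calc nu ⟨x, hx⟩
            = nu ⟨(e * f) * x * (e * f), hJr _ (J.mul_mem_left _ hx) _⟩ := hnuef x hx
          _ = nu ⟨(e * f) * (f * x * f) * (e * f), hJr _ (J.mul_mem_left _ hfxf) _⟩ :=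
              aux_evc J nu _ _ (by simp only [mul_assoc, hfe2, he2, hf2, hfe, he', hf'])
          _ = nu ⟨f * x * f, hfxf⟩ := (hnuef _ hfxf).symm
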